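/- arXiv:2204.14049 — 2 statements merged into one kernel-verified Lean document; each statement's English description precedes it below -/
import Mathlib

section
/- Fix n ≥ 2 and p ≥ 2 with 36 log p ≤ 4n, and set f = √(36 log p / n). Then f ≤ 2 implies that for all t ∈ [f, 2], p · exp(−(n/4)t²/(2 + 2t/3)) ≤ exp(1 − t/f). -/
/-!
Write `L = log p` and `s = t / f ≥ 1`, so that `n t² = 36 L s²`. For `t ≤ 2` the Bernstein
denominator is at most `10/3`, hence the exponent on the left is at most `L - (27/10) L s²`.
Since `L ≥ log 2 > 10/17`, the elementary bound `L + s ≤ (27/10) L s²` (valid for `s ≥ 1`)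
makes this at most `-s ≤ 1 - s`.
-/

theorem mul_sq_le_bernstein_exponent {a t : ℝ} (ha : 0 ≤ a) (ht0 : 0 ≤ t) (ht2 : t ≤ 2) :
    3 / 40 * a * t ^ 2 ≤ a / 4 * t ^ 2 / (2 + 2 * t / 3) := by
  rw [le_div_iff₀ (by positivity)]
  have hat : 0 ≤ a * t ^ 2 := by positivity
  nlinarith

theorem add_le_mul_sq_of_one_le {L s : ℝ} (hL : 10 / 17 ≤ L) (hs : 1 ≤ s) :
    L + s ≤ 27 / 10 * L * s ^ 2 := by
  have hL0 : 0 ≤ L := by linarith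
  calc L + s ≤ L * s + 17 / 10 * L * s := by
        gcongr
        · exact le_mul_of_one_le_right hL0 hs
        · exact le_mul_of_one_le_left (by linarith) (by linarith)
    _ = 27 / 10 * L * s := by ring
    _ ≤ 27 / 10 * L * s ^ 2 := by gcongr; nlinarith

theorem ten_div_seventeen_le_log {p : ℕ} (hp : 2 ≤ p) : (10 / 17 : ℝ) ≤ Real.log p :=
  calc (10 / 17 : ℝ) ≤ Real.log 2 := by linarith [Real.log_two_gt_d9]
    _ ≤ Real.log p := Real.log_le_log (by norm_num) (by exact_mod_cast hp)

theorem stmt_15_general (n p : ℕ) (hn : 2 ≤ n) (hp : 2 ≤ p)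
    (f : ℝ) (hf : f = Real.sqrt (36 * Real.log p / n)) :
    ∀ t ∈ Set.Icc f 2,
      (p : ℝ) * Real.exp (-((n : ℝ) / 4) * t ^ 2 / (2 + 2 * t / 3))
        ≤ Real.exp (1 - t / f) := by
  rintro t ⟨hft, ht2⟩
  set L := Real.log p
  have hL : 10 / 17 ≤ L := ten_div_seventeen_le_log hp
  have hn0 : (0 : ℝ) < n := by positivity
  have hf0 : 0 < f := hf ▸ Real.sqrt_pos.mpr (by positivity)
  have hfsq : f ^ 2 = 36 * L / n := hf ▸ Real.sq_sqrt (by positivity)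
  have hs : 1 ≤ t / f := (one_le_div hf0).mpr hft
  have hnt : (n : ℝ) * t ^ 2 = 36 * L * (t / f) ^ 2 := by
    rw [div_pow, hfsq]; field_simp
  have hbern := mul_sq_le_bernstein_exponent hn0.le (hf0.le.trans hft) ht2
  rw [← Real.exp_log (show (0 : ℝ) < p by positivity), ← Real.exp_add, Real.exp_le_exp,
    neg_mul, neg_div]
  linarith [add_le_mul_sq_of_one_le hL hs]

/-- The key elementary inequality in the concentration lemma: with
f = √(36 log p / n) ≤ 2, for every t ∈ [f, 2],
p·exp(−(n/4)t²/(2+2t/3)) ≤ exp(1 − t/f). -/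
theorem stmt_15 (n p : ℕ) (hn : 2 ≤ n) (hp : 2 ≤ p)
    (h36 : 36 * Real.log p ≤ 4 * n)
    (f : ℝ) (hf : f = Real.sqrt (36 * Real.log p / n))
    (hf2 : f ≤ 2) :
    ∀ t ∈ Set.Icc f 2,
      (p : ℝ) * Real.exp (-((n : ℝ) / 4) * t ^ 2 / (2 + 2 * t / 3))
        ≤ Real.exp (1 - t / f) :=
  stmt_15_general n p hn hp f hf
end

section
/- Let g = (g₁,…,g_q)ᵀ ∼ N(0, I_q) be a standard Gaussian vector and let λ₁ ≥ λ₂ ≥ ⋯ ≥ λ_q > 0 be positive reals. Define μ_j = E[λ_j g_j² / (λ₁g₁² + ⋯ + λ_q g_q²)] for j = 1,…,q. Then μ₁ ≥ μ₂ ≥ ⋯ ≥ μ_q, ∑_{j=1}^q μ_j = 1, and each μ_j > 0; moreover if λ_j > λ_{j+1} then μ_j > μ_{j+1}. -/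
/-!
Transport everything to the law `ν = N(0, I)` of `g` on `ℝ^q`, so that `μ_j = ∫ w_j dν` with
`w_j x = λ_j x_j² / ∑ᵢ λᵢ xᵢ²`. Off the null set where a coordinate vanishes the shares `w_j` are
positive and sum to one. For the ordering, `ν` is invariant under the transposition `σ` of two
coordinates `j, k`, so `2 (μ_j - μ_k) = ∫ (w_j + w_j ∘ σ - w_k - w_k ∘ σ) dν`, and a direct
computation shows that this integrand is `λ_j - λ_k` times a positive function.
-/

open MeasureTheory ProbabilityTheory

theorem integral_pos_of_ae_pos {α : Type*} [MeasurableSpace α] {μ : Measure α} [NeZero μ]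
    {f : α → ℝ} (hfi : Integrable f μ) (hf : ∀ᵐ x ∂μ, 0 < f x) : 0 < ∫ x, f x ∂μ := by
  rw [integral_pos_iff_support_of_nonneg_ae (hf.mono fun _ hx => hx.le) hfi, pos_iff_ne_zero]
  intro hnull
  obtain ⟨x, hx, hxs⟩ := (hf.and (measure_eq_zero_iff_ae_notMem.1 hnull)).exists
  exact hxs hx.ne'

theorem measurePreserving_comp_equiv_pi {ι α : Type*} [Fintype ι] [MeasurableSpace α]
    (m : Measure α) [SigmaFinite m] (e : ι ≃ ι) :
    MeasurePreserving (fun x : ι → α => x ∘ e) (Measure.pi fun _ => m) (Measure.pi fun _ => m) :=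
  measurePreserving_arrowCongr' (fun _ => m) (fun _ => m) e.symm (MeasurableEquiv.refl α)
    fun _ => MeasurePreserving.id m

section WeightShare

variable {ι : Type*} [Fintype ι]

noncomputable def weightShare (lam : ι → ℝ) (j : ι) (x : ι → ℝ) : ℝ :=
  lam j * x j ^ 2 / ∑ i, lam i * x i ^ 2

variable {lam : ι → ℝ}

theorem measurable_weightShare (lam : ι → ℝ) (j : ι) : Measurable (weightShare lam j) := by
  unfold weightShare
  fun_prop

theorem weightShare_nonneg (hlam : ∀ i, 0 ≤ lam i) (j : ι) (x : ι → ℝ) :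
    0 ≤ weightShare lam j x :=
  div_nonneg (mul_nonneg (hlam j) (sq_nonneg _))
    (Finset.sum_nonneg fun i _ => mul_nonneg (hlam i) (sq_nonneg _))

theorem weightShare_le_one (hlam : ∀ i, 0 ≤ lam i) (j : ι) (x : ι → ℝ) :
    weightShare lam j x ≤ 1 :=
  div_le_one_of_le₀
    (Finset.single_le_sum (fun i _ => mul_nonneg (hlam i) (sq_nonneg (x i))) (Finset.mem_univ j))
    (Finset.sum_nonneg fun i _ => mul_nonneg (hlam i) (sq_nonneg _))

theorem weightShare_pos (hlam : ∀ i, 0 < lam i) {j : ι} {x : ι → ℝ} (hx : x j ≠ 0) :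
    0 < weightShare lam j x := by
  have hnum : 0 < lam j * x j ^ 2 := mul_pos (hlam j) (by positivity)
  exact div_pos hnum <| hnum.trans_le <|
    Finset.single_le_sum (fun i _ => mul_nonneg (hlam i).le (sq_nonneg (x i))) (Finset.mem_univ j)

theorem sum_weightShare {x : ι → ℝ} (hx : ∑ i, lam i * x i ^ 2 ≠ 0) :
    ∑ j, weightShare lam j x = 1 := by
  simp only [weightShare]
  rw [← Finset.sum_div, div_self hx]

variable {ν : Measure (ι → ℝ)}

theorem integrable_weightShare [IsFiniteMeasure ν] (hlam : ∀ i, 0 ≤ lam i) (j : ι) :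
    Integrable (weightShare lam j) ν :=
  (integrable_const (1 : ℝ)).mono' (measurable_weightShare lam j).aestronglyMeasurable
    (.of_forall fun x => by
      rw [Real.norm_of_nonneg (weightShare_nonneg hlam j x)]
      exact weightShare_le_one hlam j x)

theorem integral_weightShare_pos [IsFiniteMeasure ν] [NeZero ν] (hlam : ∀ i, 0 < lam i) {j : ι}
    (hae : ∀ᵐ x ∂ν, x j ≠ 0) :
    0 < ∫ x, weightShare lam j x ∂ν :=
  integral_pos_of_ae_pos (integrable_weightShare (fun i => (hlam i).le) j)
    (hae.mono fun _ hx => weightShare_pos hlam hx)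

theorem sum_integral_weightShare [IsProbabilityMeasure ν] [Nonempty ι] (hlam : ∀ i, 0 < lam i)
    (hae : ∀ᵐ x ∂ν, ∀ i, x i ≠ 0) : ∑ j, ∫ x, weightShare lam j x ∂ν = 1 := by
  have hsum : ∀ᵐ x ∂ν, ∑ j, weightShare lam j x = 1 := hae.mono fun x hx =>
    sum_weightShare (Finset.sum_pos (fun i _ => mul_pos (hlam i) (pow_two_pos_of_ne_zero (hx i)))
      Finset.univ_nonempty).ne'
  rw [← integral_finsetSum _ fun j _ => integrable_weightShare (fun i => (hlam i).le) j,
    integral_congr_ae hsum, integral_const, probReal_univ, one_smul]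

end WeightShare

section SwapGain

variable {ι : Type*} [Fintype ι] [DecidableEq ι] {lam : ι → ℝ}

noncomputable def swapGain (lam : ι → ℝ) (j k : ι) (x : ι → ℝ) : ℝ :=
  weightShare lam j x + weightShare lam j (x ∘ Equiv.swap j k)
    - (weightShare lam k x + weightShare lam k (x ∘ Equiv.swap j k))

/-- The algebra behind `swapGain`: `t = λ_j`, `s = λ_k`, `a = x_j²`, `b = x_k²`, and `c` is the
rest of the sum `∑ᵢ λᵢ xᵢ²`. -/
theorem swap_gain_eq {t s a b c : ℝ} (h₁ : t * a + s * b + c ≠ 0) (h₂ : t * b + s * a + c ≠ 0) :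
    t * a / (t * a + s * b + c) + t * b / (t * b + s * a + c)
        - (s * b / (t * a + s * b + c) + s * a / (t * b + s * a + c))
      = (t - s) * ((2 * (t + s) * a * b + c * (a + b))
          / ((t * a + s * b + c) * (t * b + s * a + c))) := by
  rw [div_add_div _ _ h₁ h₂, div_add_div _ _ h₁ h₂, ← sub_div, mul_div_assoc']
  congr 1
  ring

theorem exists_swapGain_eq_mul (hlam : ∀ i, 0 < lam i) (j k : ι) {x : ι → ℝ}
    (hj : x j ≠ 0) (hk : x k ≠ 0) : ∃ r > 0, swapGain lam j k x = (lam j - lam k) * r := by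
  rcases eq_or_ne j k with rfl | hjk
  · exact ⟨1, one_pos, by simp [swapGain]⟩
  have hsplit : ∀ y : ι → ℝ, ∑ i, lam i * y i ^ 2
      = lam j * y j ^ 2 + lam k * y k ^ 2 + ∑ i ∈ {j, k}ᶜ, lam i * y i ^ 2 := fun y => by
    rw [← Finset.sum_add_sum_compl {j, k}, Finset.sum_pair hjk]
  have hrest : ∑ i ∈ {j, k}ᶜ, lam i * x (Equiv.swap j k i) ^ 2
      = ∑ i ∈ {j, k}ᶜ, lam i * x i ^ 2 := Finset.sum_congr rfl fun i hi => by
    simp only [Finset.mem_compl, Finset.mem_insert, Finset.mem_singleton, not_or] at hi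
    rw [Equiv.swap_apply_of_ne_of_ne hi.1 hi.2]
  simp only [swapGain, weightShare, hsplit, hrest, Function.comp_apply, Equiv.swap_apply_left,
    Equiv.swap_apply_right]
  set c := ∑ i ∈ {j, k}ᶜ, lam i * x i ^ 2
  have hc : 0 ≤ c := Finset.sum_nonneg fun i _ => mul_nonneg (hlam i).le (sq_nonneg _)
  have hj2 : 0 < x j ^ 2 := by positivity
  have hk2 : 0 < x k ^ 2 := by positivity
  have hlj := hlam j
  have hlk := hlam k
  exact ⟨_, by positivity, swap_gain_eq (by positivity) (by positivity)⟩

variable {ν : Measure (ι → ℝ)} [IsFiniteMeasure ν] {j k : ι}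

theorem integral_swapGain (hlam : ∀ i, 0 ≤ lam i)
    (hswap : MeasurePreserving (· ∘ Equiv.swap j k) ν ν) :
    Integrable (swapGain lam j k) ν ∧
      ∫ x, swapGain lam j k x ∂ν
        = 2 * (∫ x, weightShare lam j x ∂ν - ∫ x, weightShare lam k x ∂ν) := by
  have hint : ∀ i, Integrable (weightShare lam i) ν := integrable_weightShare hlam
  have hint_swap : ∀ i, Integrable (fun x => weightShare lam i (x ∘ Equiv.swap j k)) ν :=
    fun i => hswap.integrable_comp_of_integrable (hint i)
  have hcomp : ∀ i,
      ∫ x, weightShare lam i (x ∘ Equiv.swap j k) ∂ν = ∫ x, weightShare lam i x ∂ν := fun i => by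
    conv_rhs => rw [← hswap.map_eq]
    exact (integral_map hswap.aemeasurable
      (measurable_weightShare lam i).aestronglyMeasurable).symm
  have hpair : ∀ i,
      Integrable (fun x => weightShare lam i x + weightShare lam i (x ∘ Equiv.swap j k)) ν :=
    fun i => (hint i).add (hint_swap i)
  refine ⟨(hpair j).sub (hpair k), ?_⟩
  simp only [swapGain]
  rw [integral_sub (hpair j) (hpair k),
    integral_add (hint j) (hint_swap j), integral_add (hint k) (hint_swap k), hcomp, hcomp]
  ring

theorem integral_weightShare_le_of_swap (hlam : ∀ i, 0 < lam i)
    (hswap : MeasurePreserving (· ∘ Equiv.swap j k) ν ν) (hae : ∀ᵐ x ∂ν, ∀ i, x i ≠ 0)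
    (hjk : lam k ≤ lam j) : ∫ x, weightShare lam k x ∂ν ≤ ∫ x, weightShare lam j x ∂ν := by
  have hgain : 0 ≤ ∫ x, swapGain lam j k x ∂ν := integral_nonneg_of_ae <| hae.mono fun x hx => by
    obtain ⟨r, hr, hx⟩ := exists_swapGain_eq_mul hlam j k (hx j) (hx k)
    rw [Pi.zero_apply, hx]
    exact mul_nonneg (sub_nonneg.2 hjk) hr.le
  rw [(integral_swapGain (fun i => (hlam i).le) hswap).2] at hgain
  linarith

theorem integral_weightShare_lt_of_swap [NeZero ν] (hlam : ∀ i, 0 < lam i)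
    (hswap : MeasurePreserving (· ∘ Equiv.swap j k) ν ν) (hae : ∀ᵐ x ∂ν, ∀ i, x i ≠ 0)
    (hjk : lam k < lam j) : ∫ x, weightShare lam k x ∂ν < ∫ x, weightShare lam j x ∂ν := by
  obtain ⟨hint, heq⟩ := integral_swapGain (fun i => (hlam i).le) hswap
  have hgain : 0 < ∫ x, swapGain lam j k x ∂ν := integral_pos_of_ae_pos hint <| hae.mono
    fun x hx => by
      obtain ⟨r, hr, hx⟩ := exists_swapGain_eq_mul hlam j k (hx j) (hx k)
      rw [hx]
      exact mul_pos (sub_pos.2 hjk) hr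
  rw [heq] at hgain
  linarith

end SwapGain

/-- For a standard Gaussian vector g and positive reals λ₁ ≥ ⋯ ≥ λ_q, the
quantities μ_j = E[λ_j g_j²/∑ᵢ λᵢ gᵢ²] are decreasing, positive, sum to one, and
are strictly decreasing across a strict gap in the λ's. -/
theorem stmt_19 {Ω : Type} [MeasurableSpace Ω] (P : Measure Ω) [IsProbabilityMeasure P]
    {q : ℕ} (hq : 0 < q)
    (g : Fin q → Ω → ℝ) (hgm : ∀ j, Measurable (g j))
    (hindep : iIndepFun g P)
    (hgauss : ∀ j, Measure.map (g j) P = gaussianReal 0 1)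
    (lam : Fin q → ℝ) (hpos : ∀ j, 0 < lam j)
    (hmono : ∀ i j : Fin q, i ≤ j → lam j ≤ lam i)
    (μ : Fin q → ℝ)
    (hμ : ∀ j, μ j = ∫ ω, (lam j * (g j ω) ^ 2) / (∑ i, lam i * (g i ω) ^ 2) ∂P) :
    (∀ i j : Fin q, i ≤ j → μ j ≤ μ i) ∧
    (∑ j, μ j) = 1 ∧
    (∀ j, 0 < μ j) ∧
    (∀ j k : Fin q, (j : ℕ) + 1 = (k : ℕ) → lam k < lam j → μ k < μ j) := by
  set ν := Measure.pi fun _ : Fin q => gaussianReal 0 1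
  have hlaw : P.map (fun ω i => g i ω) = ν := by
    rw [(iIndepFun_iff_map_fun_eq_pi_map fun i => (hgm i).aemeasurable).1 hindep]
    simp only [hgauss, ν]
  have hμν : μ = fun j => ∫ x, weightShare lam j x ∂ν := funext fun j => by
    rw [hμ j, ← hlaw, integral_map (measurable_pi_lambda _ hgm).aemeasurable
      (measurable_weightShare lam j).aestronglyMeasurable]
    rfl
  have hswap (j k : Fin q) : MeasurePreserving (· ∘ Equiv.swap j k) ν ν :=
    measurePreserving_comp_equiv_pi _ _
  have : NullSingletonClass (gaussianReal 0 1) := nullSingletonClass_gaussianReal one_ne_zero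
  have hae : ∀ᵐ x ∂ν, ∀ i, x i ≠ 0 :=
    ae_all_iff.2 fun i => Measure.tendsto_eval_ae_ae.eventually (Measure.ae_ne _ 0)
  have : Nonempty (Fin q) := ⟨⟨0, hq⟩⟩
  subst hμν
  exact ⟨fun i j hij => integral_weightShare_le_of_swap hpos (hswap i j) hae (hmono i j hij),
    sum_integral_weightShare hpos hae,
    fun j => integral_weightShare_pos hpos (hae.mono fun _ hx => hx j),
    fun j k _ hlt => integral_weightShare_lt_of_swap hpos (hswap j k) hae hlt⟩
end
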